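/- Let H be the infinite matrix with entries H_{m,m+h;l+h,l} = (2/θ)(1+Ω²)(2m+h+1)δ_{m,l} − (2/θ)(1−Ω²)[√((m+h+1)(m+1))·δ_{m+1,l} + √((m+h)m)·δ_{m−1,l}] (the B = 0 case), θ > 0, 0 < Ω < 1. Fix h ∈ ℕ, set C = (1−Ω)²/(4Ω), and define for α ∈ [0,1), u ≤ min(m,l): P(α)_{m,l} = Σ_{u} A(m,l,h,u)·(C(1+Ω)/(1−Ω))^{m+l−2u}·(1−α)^{(h+2u+1)/2}·α^{m+l−2u}/(1+Cα)^{m+l+h+1}, with A(m,l,h,u) = √(m!(m+h)!l!(l+h)!)/((m−u)!(l−u)!(h+u)!u!). Then P satisfies the ODE (1−α)·dP/dα + (θ/(8Ω))·H·P = 0 entrywise, i.e., for all m, l: −(1−α)(d/dα)P(α)_{m,l} = ((1+Ω²)/(4Ω))(2m+h+1)·P(α)_{m,l} − ((1−Ω²)/(4Ω))[√((m+h+1)(m+1))·P(α)_{m+1,l} + √((m+h)m)·P(α)_{m−1,l}]. -/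

import Mathlib

open Finset Real

/-- The combinatorial factor `A(m,l,h,u)`. -/
noncomputable def calA (m l h u : ℕ) : ℝ :=
  Real.sqrt ((Nat.factorial m) * (Nat.factorial (m+h)) * (Nat.factorial l)
    * (Nat.factorial (l+h)))
  / ((Nat.factorial (m-u)) * (Nat.factorial (l-u)) * (Nat.factorial (h+u))
    * (Nat.factorial u))

/-- Matrix elements `P(α)_{m,l} = [(1-α)^{(θ/8Ω)H}]_{m,m+h;l+h,l}` (B = 0 case). -/
noncomputable def Pmat (Ω : ℝ) (h : ℕ) (α : ℝ) (m l : ℕ) : ℝ :=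
  let C : ℝ := (1-Ω)^2/(4*Ω)
  ∑ u ∈ Finset.range (min m l + 1),
    calA m l h u * (C*(1+Ω)/(1-Ω)) ^ (m+l-2*u)
      * (1-α) ^ ((((h:ℝ)+2*(u:ℝ)+1)/2 : ℝ))
      * α ^ (m+l-2*u) / (1+C*α) ^ (m+l+h+1)

/-!
Pull the factor `√(m! (m+h)! l! (l+h)!)` out of `Pmat`. Every remaining summand has the shape
`(1-α)^r α^n (1+Cα)^(-k)` times a constant, so `-(1-α) d/dα` acts on it by multiplication with a
rational function of `α`, and the summands of the rows `m-1` and `m` are rational multiples of those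
of row `m+1`. Both sides of the equation thereby become sums over `u` of the row-`(m+1)` summands
with rational coefficients. With `D = C(1+Ω)/(1-Ω) = (1-Ω²)/(4Ω)` one has `D² = C² + C`, and this
reduces the difference of the coefficients to `D/(Dα)² · (u(h+u)(Dα)² - (m+1-u)(l-u)(1-α))`,
whose weighted sum telescopes to zero.
-/

open scoped Nat

noncomputable def coeffC (Ω : ℝ) : ℝ := (1 - Ω) ^ 2 / (4 * Ω)

noncomputable def coeffD (Ω : ℝ) : ℝ := coeffC Ω * (1 + Ω) / (1 - Ω)

lemma coeffD_sq {Ω : ℝ} (hΩ0 : Ω ≠ 0) (hΩ1 : Ω ≠ 1) :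
    coeffD Ω ^ 2 = coeffC Ω ^ 2 + coeffC Ω := by
  have : 1 - Ω ≠ 0 := sub_ne_zero.mpr hΩ1.symm
  unfold coeffD coeffC
  field_simp
  ring

lemma coeffC_nonneg {Ω : ℝ} (hΩ : 0 ≤ Ω) : 0 ≤ coeffC Ω := by
  unfold coeffC
  positivity

lemma coeffD_ne_zero {Ω : ℝ} (hΩ0 : 0 < Ω) (hΩ1 : Ω ≠ 1) : coeffD Ω ≠ 0 := by
  have : 1 - Ω ≠ 0 := sub_ne_zero.mpr hΩ1.symm
  unfold coeffD coeffC
  positivity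

lemma one_add_sq_div {Ω : ℝ} (hΩ : Ω ≠ 0) : (1 + Ω ^ 2) / (4 * Ω) = coeffC Ω + 1 / 2 := by
  unfold coeffC
  field_simp
  ring

lemma one_sub_sq_div {Ω : ℝ} (hΩ0 : Ω ≠ 0) (hΩ1 : Ω ≠ 1) : (1 - Ω ^ 2) / (4 * Ω) = coeffD Ω := by
  have : 1 - Ω ≠ 0 := sub_ne_zero.mpr hΩ1.symm
  unfold coeffD coeffC
  field_simp
  ring

noncomputable def sqrtFact (m l h : ℕ) : ℝ := √((m ! : ℝ) * (m + h)! * l ! * (l + h)!)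

lemma sqrtFact_succ (m l h : ℕ) :
    sqrtFact (m + 1) l h = √(((m : ℝ) + h + 1) * (m + 1)) * sqrtFact m l h := by
  unfold sqrtFact
  rw [← Real.sqrt_mul (by positivity), show m + 1 + h = m + h + 1 by omega,
    Nat.factorial_succ, Nat.factorial_succ]
  push_cast
  ring_nf

lemma sqrt_mul_sqrtFact_succ (m l h : ℕ) :
    √(((m : ℝ) + h + 1) * (m + 1)) * sqrtFact (m + 1) l h
      = ((m : ℝ) + 1) * (m + h + 1) * sqrtFact m l h := by
  rw [sqrtFact_succ, ← mul_assoc, Real.mul_self_sqrt (by positivity)]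
  ring

lemma natCast_mul_pow_sub_one {x : ℝ} (hx : x ≠ 0) (n : ℕ) :
    (n : ℝ) * x ^ (n - 1) = n * x ^ n / x := by
  rcases n with _ | n
  · simp
  · rw [pow_succ, Nat.add_sub_cancel, mul_div_assoc, mul_div_cancel_right₀ _ hx]

theorem hasDerivAt_one_sub_rpow_mul_pow_div_pow {α c r : ℝ} (n k : ℕ) (hα0 : α ≠ 0)
    (hα1 : α < 1) (hQ : 1 + c * α ≠ 0) :
    HasDerivAt (fun β => (1 - β) ^ r * β ^ n / (1 + c * β) ^ k)
      ((1 - α) ^ r * α ^ n / (1 + c * α) ^ k * (n / α - r / (1 - α) - k * c / (1 + c * α))) α := by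
  have hw : 1 - α ≠ 0 := sub_ne_zero.mpr hα1.ne'
  have hrpow : HasDerivAt (fun β => (1 - β) ^ r) (-1 * r * (1 - α) ^ (r - 1)) α :=
    ((hasDerivAt_id α).const_sub 1).rpow_const (Or.inl hw)
  have hden : HasDerivAt (fun β => (1 + c * β) ^ k) (k * (1 + c * α) ^ (k - 1) * (c * 1)) α :=
    (((hasDerivAt_id α).const_mul c).const_add 1).pow k
  refine ((hrpow.fun_mul (hasDerivAt_pow n α)).fun_div hden (pow_ne_zero k hQ)).congr_deriv ?_
  rw [Real.rpow_sub_one hw, natCast_mul_pow_sub_one hα0, natCast_mul_pow_sub_one hQ]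
  have hQk : (1 + c * α) ^ k ≠ 0 := pow_ne_zero k hQ
  generalize (1 + c * α) ^ k = P at hQk ⊢
  generalize 1 + c * α = Q at hQ ⊢
  field_simp
  ring

lemma ode_coefficient_identity {m l h u α C D : ℝ} (hα : α ≠ 0) (hD : D ≠ 0)
    (hQ : 1 + C * α ≠ 0) (hD2 : D ^ 2 = C ^ 2 + C) :
    (m + 1 - u) * (1 + C * α) / (D * α) * ((h + 2 * u + 1) / 2 - (m + l - 2 * u) * (1 - α) / α
        + (m + l + h + 1) * C * (1 - α) / (1 + C * α))
      = (C + 1 / 2) * (2 * m + h + 1) * ((m + 1 - u) * (1 + C * α) / (D * α))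
        - D * ((m + 1) * (m + h + 1)
          + (m + 1 - u) * (1 + C * α) / (D * α) * ((m - u) * (1 + C * α) / (D * α)))
        + D / (D * α) ^ 2 * (u * (h + u) * (D * α) ^ 2 - (m + 1 - u) * (l - u) * (1 - α)) := by
  field_simp
  linear_combination (2 * α ^ 2 * ((m + 1) * (m + h + 1) - u * (h + u))) * hD2

noncomputable def reducedTerm (Ω : ℝ) (h : ℕ) (α : ℝ) (m l u : ℕ) : ℝ :=
  (1 - α) ^ ((((h : ℝ) + 2 * (u : ℝ) + 1) / 2 : ℝ)) * (coeffD Ω * α) ^ (m + l - 2 * u)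
    / ((1 + coeffC Ω * α) ^ (m + l + h + 1) * ((m - u)! * (l - u)! * (h + u)! * u ! : ℝ))

section

variable {Ω α : ℝ} {h m l u : ℕ}

lemma calA_mul_eq_sqrtFact_mul_reducedTerm :
    calA m l h u * coeffD Ω ^ (m + l - 2 * u) * (1 - α) ^ ((((h : ℝ) + 2 * (u : ℝ) + 1) / 2 : ℝ))
      * α ^ (m + l - 2 * u) / (1 + coeffC Ω * α) ^ (m + l + h + 1)
      = sqrtFact m l h * reducedTerm Ω h α m l u := by
  unfold calA sqrtFact reducedTerm
  simp only [div_eq_mul_inv, mul_inv, mul_pow]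
  ring

lemma Pmat_eq_sqrtFact_mul_sum :
    Pmat Ω h α m l = sqrtFact m l h * ∑ u ∈ range (min m l + 1), reducedTerm Ω h α m l u := by
  rw [mul_sum]
  exact sum_congr rfl fun u _ => calA_mul_eq_sqrtFact_mul_reducedTerm

lemma reducedTerm_eq_succ_mul (hz : coeffD Ω * α ≠ 0) (hQ : 1 + coeffC Ω * α ≠ 0)
    (hum : u ≤ m) (hul : u ≤ l) :
    reducedTerm Ω h α m l u = reducedTerm Ω h α (m + 1) l u
      * (((m : ℝ) + 1 - u) * (1 + coeffC Ω * α) / (coeffD Ω * α)) := by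
  have hfac : ((m + 1 - u)! : ℝ) = ((m : ℝ) + 1 - u) * (m - u)! := by
    rw [show m + 1 - u = m - u + 1 by omega, Nat.factorial_succ]
    push_cast [Nat.cast_sub hum]
    ring
  unfold reducedTerm
  rw [hfac, show m + 1 + l - 2 * u = m + l - 2 * u + 1 by omega,
    show m + 1 + l + h + 1 = m + l + h + 1 + 1 by omega, pow_succ (coeffD Ω * α),
    pow_succ (1 + coeffC Ω * α) (m + l + h + 1)]
  have : (m : ℝ) + 1 - u ≠ 0 := by
    have : (u : ℝ) ≤ m := by exact_mod_cast hum
    linarith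
  generalize (1 + coeffC Ω * α) ^ (m + l + h + 1) = P
  generalize 1 + coeffC Ω * α = Q at hQ ⊢
  generalize coeffD Ω * α = z at hz ⊢
  field_simp

lemma reducedTerm_succ_mul_eq (hw : 1 - α ≠ 0) (hum : u < m) (hul : u < l) :
    reducedTerm Ω h α m l (u + 1) * (((u : ℝ) + 1) * (h + u + 1) * (coeffD Ω * α) ^ 2)
      = reducedTerm Ω h α m l u * (((m : ℝ) - u) * (l - u) * (1 - α)) := by
  have hr : ((((h : ℝ) + 2 * ((u + 1 : ℕ) : ℝ) + 1) / 2 : ℝ))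
      = (((h : ℝ) + 2 * (u : ℝ) + 1) / 2 : ℝ) + 1 := by push_cast; ring
  have hfm : ((m - u)! : ℝ) = ((m : ℝ) - u) * (m - (u + 1))! := by
    rw [show m - u = m - (u + 1) + 1 by omega, Nat.factorial_succ]
    push_cast [Nat.cast_sub (show u + 1 ≤ m by omega)]
    ring
  have hfl : ((l - u)! : ℝ) = ((l : ℝ) - u) * (l - (u + 1))! := by
    rw [show l - u = l - (u + 1) + 1 by omega, Nat.factorial_succ]
    push_cast [Nat.cast_sub (show u + 1 ≤ l by omega)]
    ring
  unfold reducedTerm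
  rw [hr, Real.rpow_add_one hw, hfm, hfl, show h + (u + 1) = h + u + 1 by omega,
    show m + l - 2 * u = m + l - 2 * (u + 1) + 2 by omega, pow_add, Nat.factorial_succ u,
    Nat.factorial_succ (h + u)]
  have hmu : (m : ℝ) - u ≠ 0 := sub_ne_zero.mpr (by exact_mod_cast hum.ne')
  have hlu : (l : ℝ) - u ≠ 0 := sub_ne_zero.mpr (by exact_mod_cast hul.ne')
  generalize (1 + coeffC Ω * α) ^ (m + l + h) = P
  push_cast
  field_simp
  ring

lemma sum_reducedTerm_mul_eq_sum_succ (hz : coeffD Ω * α ≠ 0) (hQ : 1 + coeffC Ω * α ≠ 0)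
    (F : ℕ → ℝ) :
    ∑ u ∈ range (min m l + 1), reducedTerm Ω h α m l u * F u
      = ∑ u ∈ range (min (m + 1) l + 1), reducedTerm Ω h α (m + 1) l u
          * (((m : ℝ) + 1 - u) * (1 + coeffC Ω * α) / (coeffD Ω * α) * F u) := by
  refine sum_subset_zero_on_sdiff (range_subset_range.mpr (by omega)) ?_ ?_
  · intro u hu
    simp only [mem_sdiff, mem_range] at hu
    obtain rfl : u = m + 1 := by omega
    push_cast
    ring
  · intro u hu
    simp only [mem_range] at hu
    rw [reducedTerm_eq_succ_mul hz hQ (by omega) (by omega)]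
    ring

lemma sum_reducedTerm_telescope (hw : 1 - α ≠ 0) :
    ∑ u ∈ range (min m l + 1), reducedTerm Ω h α m l u
      * ((u : ℝ) * (h + u) * (coeffD Ω * α) ^ 2 - ((m : ℝ) - u) * (l - u) * (1 - α)) = 0 := by
  rw [sum_congr rfl fun u _ => mul_sub _ _ _, sum_sub_distrib, sub_eq_zero, sum_range_succ',
    sum_range_succ]
  have hlast : ((m : ℝ) - (min m l : ℕ)) * (l - (min m l : ℕ)) = 0 := by
    rcases min_choice m l with hmin | hmin <;> rw [hmin] <;> ring
  rw [hlast]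
  push_cast
  simp only [zero_mul, mul_zero, add_zero]
  refine sum_congr rfl fun u hu => ?_
  simp only [mem_range, lt_min_iff] at hu
  rw [← reducedTerm_succ_mul_eq hw hu.1 hu.2]
  ring

lemma neg_one_sub_mul_deriv_Pmat (hQ : 1 + coeffC Ω * α ≠ 0) (hα0 : α ≠ 0) (hα1 : α < 1) :
    -(1 - α) * deriv (fun β => Pmat Ω h β m l) α
      = sqrtFact m l h * ∑ u ∈ range (min m l + 1), reducedTerm Ω h α m l u
          * (((h : ℝ) + 2 * u + 1) / 2 - ((m : ℝ) + l - 2 * u) * (1 - α) / α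
            + ((m : ℝ) + l + h + 1) * coeffC Ω * (1 - α) / (1 + coeffC Ω * α)) := by
  have hw : 1 - α ≠ 0 := sub_ne_zero.mpr hα1.ne'
  have hPmat : (fun β => Pmat Ω h β m l) = fun β => ∑ u ∈ range (min m l + 1),
      calA m l h u * coeffD Ω ^ (m + l - 2 * u)
        * ((1 - β) ^ ((((h : ℝ) + 2 * (u : ℝ) + 1) / 2 : ℝ)) * β ^ (m + l - 2 * u)
          / (1 + coeffC Ω * β) ^ (m + l + h + 1)) :=
    funext fun β => sum_congr rfl fun u _ => by simp only [coeffD, coeffC]; ring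
  rw [hPmat, (HasDerivAt.fun_sum fun u _ => (hasDerivAt_one_sub_rpow_mul_pow_div_pow
    (m + l - 2 * u) (m + l + h + 1) hα0 hα1 hQ).const_mul _).deriv, mul_sum, mul_sum]
  refine sum_congr rfl fun u hu => ?_
  simp only [mem_range, Nat.lt_succ_iff, le_min_iff] at hu
  rw [← mul_assoc (sqrtFact m l h), ← calA_mul_eq_sqrtFact_mul_reducedTerm, Nat.cast_sub (by omega)]
  push_cast
  field_simp
  ring

lemma Pmat_eq_sum_succ (hz : coeffD Ω * α ≠ 0) (hQ : 1 + coeffC Ω * α ≠ 0) :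
    Pmat Ω h α m l = sqrtFact m l h * ∑ u ∈ range (min (m + 1) l + 1),
      reducedTerm Ω h α (m + 1) l u * (((m : ℝ) + 1 - u) * (1 + coeffC Ω * α) / (coeffD Ω * α)) := by
  have hshift := sum_reducedTerm_mul_eq_sum_succ (h := h) (m := m) (l := l) hz hQ fun _ => 1
  simp only [mul_one] at hshift
  rw [Pmat_eq_sqrtFact_mul_sum, hshift]

lemma sqrt_mul_Pmat_succ :
    √(((m : ℝ) + h + 1) * (m + 1)) * Pmat Ω h α (m + 1) l
      = ((m : ℝ) + 1) * (m + h + 1) * sqrtFact m l h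
        * ∑ u ∈ range (min (m + 1) l + 1), reducedTerm Ω h α (m + 1) l u := by
  rw [Pmat_eq_sqrtFact_mul_sum, ← mul_assoc, sqrt_mul_sqrtFact_succ]

lemma sqrt_mul_Pmat_pred (hz : coeffD Ω * α ≠ 0) (hQ : 1 + coeffC Ω * α ≠ 0) :
    √(((m : ℝ) + h) * m) * Pmat Ω h α (m - 1) l
      = sqrtFact m l h * ∑ u ∈ range (min (m + 1) l + 1), reducedTerm Ω h α (m + 1) l u
        * (((m : ℝ) + 1 - u) * (1 + coeffC Ω * α) / (coeffD Ω * α)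
          * (((m : ℝ) - u) * (1 + coeffC Ω * α) / (coeffD Ω * α))) := by
  rcases m with _ | k
  · rw [Nat.cast_zero, mul_zero, Real.sqrt_zero, zero_mul, eq_comm, mul_eq_zero]
    refine Or.inr (sum_eq_zero fun u hu => ?_)
    simp only [mem_range] at hu
    rcases (show u = 0 ∨ u = 1 by omega) with rfl | rfl <;> simp
  · rw [Nat.add_sub_cancel, Pmat_eq_sqrtFact_mul_sum, ← mul_assoc,
      show √((((k + 1 : ℕ) : ℝ) + h) * ((k + 1 : ℕ) : ℝ)) * sqrtFact k l h = sqrtFact (k + 1) l h by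
        rw [sqrtFact_succ]; push_cast; ring_nf]
    have hshift := sum_reducedTerm_mul_eq_sum_succ (h := h) (m := k) (l := l) hz hQ fun _ => 1
    simp only [mul_one] at hshift
    rw [hshift, sum_reducedTerm_mul_eq_sum_succ hz hQ]
    refine congrArg _ (sum_congr rfl fun u _ => ?_)
    push_cast
    ring

lemma neg_one_sub_mul_deriv_Pmat_eq_sum_succ (hz : coeffD Ω * α ≠ 0)
    (hQ : 1 + coeffC Ω * α ≠ 0) (hα0 : α ≠ 0) (hα1 : α < 1) :
    -(1 - α) * deriv (fun β => Pmat Ω h β m l) α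
      = sqrtFact m l h * ∑ u ∈ range (min (m + 1) l + 1), reducedTerm Ω h α (m + 1) l u
        * (((m : ℝ) + 1 - u) * (1 + coeffC Ω * α) / (coeffD Ω * α)
          * (((h : ℝ) + 2 * u + 1) / 2 - ((m : ℝ) + l - 2 * u) * (1 - α) / α
            + ((m : ℝ) + l + h + 1) * coeffC Ω * (1 - α) / (1 + coeffC Ω * α))) := by
  rw [neg_one_sub_mul_deriv_Pmat hQ hα0 hα1, sum_reducedTerm_mul_eq_sum_succ hz hQ]

lemma sum_reducedTerm_ode (hα0 : α ≠ 0) (hw : 1 - α ≠ 0) (hD : coeffD Ω ≠ 0)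
    (hQ : 1 + coeffC Ω * α ≠ 0) (hD2 : coeffD Ω ^ 2 = coeffC Ω ^ 2 + coeffC Ω) :
    ∑ u ∈ range (min (m + 1) l + 1), reducedTerm Ω h α (m + 1) l u
        * (((m : ℝ) + 1 - u) * (1 + coeffC Ω * α) / (coeffD Ω * α)
          * (((h : ℝ) + 2 * u + 1) / 2 - ((m : ℝ) + l - 2 * u) * (1 - α) / α
            + ((m : ℝ) + l + h + 1) * coeffC Ω * (1 - α) / (1 + coeffC Ω * α)))
      = (coeffC Ω + 1 / 2) * (2 * (m : ℝ) + h + 1) * ∑ u ∈ range (min (m + 1) l + 1),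
          reducedTerm Ω h α (m + 1) l u * (((m : ℝ) + 1 - u) * (1 + coeffC Ω * α) / (coeffD Ω * α))
        - coeffD Ω * (((m : ℝ) + 1) * (m + h + 1)
            * ∑ u ∈ range (min (m + 1) l + 1), reducedTerm Ω h α (m + 1) l u
          + ∑ u ∈ range (min (m + 1) l + 1), reducedTerm Ω h α (m + 1) l u
            * (((m : ℝ) + 1 - u) * (1 + coeffC Ω * α) / (coeffD Ω * α)
              * (((m : ℝ) - u) * (1 + coeffC Ω * α) / (coeffD Ω * α)))) := by
  have htel := sum_reducedTerm_telescope (Ω := Ω) (h := h) (m := m + 1) (l := l) hw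
  rw [← sub_eq_zero, ← mul_zero (coeffD Ω / (coeffD Ω * α) ^ 2), ← htel]
  simp only [mul_sum, ← sum_add_distrib, ← sum_sub_distrib]
  refine sum_congr rfl fun u _ => ?_
  push_cast
  linear_combination reducedTerm Ω h α (m + 1) l u
    * ode_coefficient_identity (m := m) (l := l) (h := h) (u := u) hα0 hD hQ hD2

end

theorem Pmat_satisfies_ODE_general (Ω : ℝ) (hΩ0 : 0 < Ω) (hΩ1 : Ω < 1)
    (h : ℕ) (α : ℝ) (hα0 : 0 < α) (hα1 : α < 1) (m l : ℕ) :
    -(1-α) * deriv (fun β => Pmat Ω h β m l) α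
      = ((1+Ω^2)/(4*Ω)) * (2*(m:ℝ)+(h:ℝ)+1) * Pmat Ω h α m l
        - ((1-Ω^2)/(4*Ω)) *
          (Real.sqrt (((m:ℝ)+(h:ℝ)+1)*((m:ℝ)+1)) * Pmat Ω h α (m+1) l
            + Real.sqrt (((m:ℝ)+(h:ℝ))*(m:ℝ)) * Pmat Ω h α (m-1) l) := by
  have hD : coeffD Ω ≠ 0 := coeffD_ne_zero hΩ0 hΩ1.ne
  have hz : coeffD Ω * α ≠ 0 := mul_ne_zero hD hα0.ne'
  have hQ : 1 + coeffC Ω * α ≠ 0 := by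
    have := coeffC_nonneg hΩ0.le
    positivity
  rw [one_add_sq_div hΩ0.ne', one_sub_sq_div hΩ0.ne' hΩ1.ne, sqrt_mul_Pmat_succ,
    sqrt_mul_Pmat_pred hz hQ, Pmat_eq_sum_succ hz hQ,
    neg_one_sub_mul_deriv_Pmat_eq_sum_succ hz hQ hα0.ne' hα1,
    sum_reducedTerm_ode hα0.ne' (sub_ne_zero.mpr hα1.ne') hD hQ (coeffD_sq hΩ0.ne' hΩ1.ne)]
  ring

theorem Pmat_satisfies_ODE (θ Ω : ℝ) (hθ : 0 < θ) (hΩ0 : 0 < Ω) (hΩ1 : Ω < 1)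
    (h : ℕ) (α : ℝ) (hα0 : 0 < α) (hα1 : α < 1) (m l : ℕ) :
    -(1-α) * deriv (fun β => Pmat Ω h β m l) α
      = ((1+Ω^2)/(4*Ω)) * (2*(m:ℝ)+(h:ℝ)+1) * Pmat Ω h α m l
        - ((1-Ω^2)/(4*Ω)) *
          (Real.sqrt (((m:ℝ)+(h:ℝ)+1)*((m:ℝ)+1)) * Pmat Ω h α (m+1) l
            + Real.sqrt (((m:ℝ)+(h:ℝ))*(m:ℝ)) * Pmat Ω h α (m-1) l) :=
  Pmat_satisfies_ODE_general Ω hΩ0 hΩ1 h α hα0 hα1 m l
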